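/- For a memoryless stationary source X₁,...,Xₙ i.i.d. ~ p_X, any encoder fₙ: 𝒳ⁿ → {1,...,2^{nR}} and decoder gₙ with output X̂ⁿ satisfying (1/n)Σᵢ E[Δ(Xᵢ,X̂ᵢ)] ≤ D and (1/n)Σᵢ d(p_{Xᵢ}, p_{X̂ᵢ}) ≤ P must have rate R ≥ R(D,P), where R(D,P) is the (information) rate-distortion-perception function, provided d is convex in its second argument. -/

import Mathlib

/-!
Let `X̂ = g (f X)` and let `Kᵢ` be the test channel from `Xᵢ` to `X̂ᵢ`. The averaged channel
`K = (1/n) ∑ᵢ Kᵢ` is admissible for `R(D, P)`: its distortion is the average distortion by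
linearity, and its output law is the average of the laws of the `X̂ᵢ`, so convexity of `d` bounds
its perception. Mutual information is convex in the channel (log-sum inequality), so
`I(p, K) ≤ (1/n) ∑ᵢ I(Xᵢ; X̂ᵢ)`.

It remains to show `∑ᵢ I(Xᵢ; X̂ᵢ) ≤ log M`. Put `s x = ∏ᵢ P(Xᵢ = xᵢ, X̂ᵢ = x̂ᵢ) / P(X̂ᵢ = x̂ᵢ)`
with `x̂ = g (f x)`; independence of the `Xᵢ` gives `∑ᵢ I(Xᵢ; X̂ᵢ) = E[log (s X / pⁿ X)]`. Each
factor of `s` is a conditional law summing to at most one over `xᵢ`, and `x̂` takes at most `M`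
values, so `∑ₓ s x ≤ M`, and Gibbs' inequality gives `E[log (s X / pⁿ X)] ≤ log M`.
-/

open scoped BigOperators ENNReal

/-- A probability mass function on a finite alphabet. -/
def IsPMF {𝓧 : Type*} [Fintype 𝓧] (p : 𝓧 → ℝ) : Prop :=
  (∀ x, 0 ≤ p x) ∧ ∑ x, p x = 1

/-- A conditional distribution (channel/kernel) on a finite alphabet. -/
def IsKernel {𝓧 : Type*} [Fintype 𝓧] (K : 𝓧 → 𝓧 → ℝ) : Prop :=
  ∀ x, IsPMF (K x)

/-- Output (marginal) distribution of the reconstruction `X̂`. -/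
def outDist {𝓧 : Type*} [Fintype 𝓧] (p : 𝓧 → ℝ) (K : 𝓧 → 𝓧 → ℝ) : 𝓧 → ℝ :=
  fun y => ∑ x, p x * K x y

/-- Expected distortion `E[Δ(X, X̂)]`. -/
def expDistortion {𝓧 : Type*} [Fintype 𝓧] (p : 𝓧 → ℝ) (Δ : 𝓧 → 𝓧 → ℝ)
    (K : 𝓧 → 𝓧 → ℝ) : ℝ :=
  ∑ x, ∑ y, p x * K x y * Δ x y

/-- Mutual information `I(X; X̂)` in bits (log base 2). -/
noncomputable def mutualInfo {𝓧 : Type*} [Fintype 𝓧] (p : 𝓧 → ℝ) (K : 𝓧 → 𝓧 → ℝ) : ℝ :=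
  ∑ x, ∑ y, p x * K x y * Real.logb 2 (K x y / outDist p K y)

/-- The (information) rate-distortion-perception function, in bits. -/
noncomputable def RDP {𝓧 : Type*} [Fintype 𝓧] (p : 𝓧 → ℝ) (Δ : 𝓧 → 𝓧 → ℝ)
    (d : (𝓧 → ℝ) → (𝓧 → ℝ) → ℝ) (D P : ℝ) : ℝ≥0∞ :=
  sInf { r : ℝ≥0∞ | ∃ K : 𝓧 → 𝓧 → ℝ, IsKernel K ∧ expDistortion p Δ K ≤ D ∧
    d p (outDist p K) ≤ P ∧ r = ENNReal.ofReal (mutualInfo p K) }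

/-- The iid (product) distribution of a source sequence X₁,…,Xₙ. -/
def prodPMF {𝓧 : Type*} [Fintype 𝓧] (p : 𝓧 → ℝ) (n : ℕ) : (Fin n → 𝓧) → ℝ :=
  fun x => ∏ i, p (x i)

open Finset Real

section LogSum

theorem sub_le_mul_log_div {a b : ℝ} (ha : 0 ≤ a) (hb : 0 ≤ b) (hab : 0 < a → 0 < b) :
    a - b ≤ a * log (a / b) := by
  rcases ha.eq_or_lt with rfl | ha
  · simpa using hb
  have hb := hab ha
  have key := mul_le_mul_of_nonneg_left (log_le_sub_one_of_pos (div_pos hb ha)) ha.le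
  have hlog : log (b / a) = -log (a / b) := by rw [← log_inv, inv_div]
  have : a * (b / a - 1) = b - a := by field_simp
  rw [hlog] at key
  linarith

theorem sum_pos_of_sum_pos_of_pos_imp {ι : Type*} (s : Finset ι) {a b : ι → ℝ}
    (hb : ∀ i ∈ s, 0 ≤ b i) (hab : ∀ i ∈ s, 0 < a i → 0 < b i) (hA : 0 < ∑ i ∈ s, a i) :
    0 < ∑ i ∈ s, b i := by
  obtain ⟨j, hj, haj⟩ := exists_lt_of_sum_lt (f := fun _ => 0) (g := a) (by simpa using hA)
  exact (hab j hj haj).trans_le (single_le_sum hb hj)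

theorem sum_mul_log_sum_div_sum_le {ι : Type*} (s : Finset ι) {a b : ι → ℝ}
    (ha : ∀ i ∈ s, 0 ≤ a i) (hb : ∀ i ∈ s, 0 ≤ b i) (hab : ∀ i ∈ s, 0 < a i → 0 < b i) :
    (∑ i ∈ s, a i) * log ((∑ i ∈ s, a i) / ∑ i ∈ s, b i) ≤ ∑ i ∈ s, a i * log (a i / b i) := by
  rcases (sum_nonneg ha).eq_or_lt with hA | hA
  · rw [← hA, zero_mul]
    exact sum_nonneg fun i hi => by
      rw [(sum_eq_zero_iff_of_nonneg ha).1 hA.symm i hi, zero_mul]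
  have hB := sum_pos_of_sum_pos_of_pos_imp s hb hab hA
  set c := (∑ i ∈ s, a i) / ∑ i ∈ s, b i
  have hc : 0 < c := div_pos hA hB
  -- Gibbs' inequality against `b` rescaled to the total mass of `a`
  have gibbs : ∀ i ∈ s, a i - b i * c ≤ a i * log (a i / b i) - a i * log c := fun i hi => by
    rcases (ha i hi).eq_or_lt with h0 | hai
    · simp [← h0, mul_nonneg (hb i hi) hc.le]
    have hbi := hab i hi hai
    have := sub_le_mul_log_div (ha i hi) (mul_nonneg hbi.le hc.le) fun _ => mul_pos hbi hc
    rwa [← div_div, log_div (div_pos hai hbi).ne' hc.ne', mul_sub] at this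
  have hscale : ∑ i ∈ s, b i * c = ∑ i ∈ s, a i := by
    rw [← sum_mul, mul_div_cancel₀ _ hB.ne']
  have := sum_le_sum gibbs
  rw [sum_sub_distrib, sum_sub_distrib, hscale, ← sum_mul] at this
  linarith

theorem sum_mul_logb_sum_div_sum_le {ι : Type*} (s : Finset ι) {c : ℝ} (hc : 1 < c) {a b : ι → ℝ}
    (ha : ∀ i ∈ s, 0 ≤ a i) (hb : ∀ i ∈ s, 0 ≤ b i) (hab : ∀ i ∈ s, 0 < a i → 0 < b i) :
    (∑ i ∈ s, a i) * logb c ((∑ i ∈ s, a i) / ∑ i ∈ s, b i) ≤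
      ∑ i ∈ s, a i * logb c (a i / b i) := by
  simp only [logb, ← mul_div_assoc, ← sum_div]
  exact div_le_div_of_nonneg_right (sum_mul_log_sum_div_sum_le s ha hb hab) (log_pos hc).le

theorem sum_mul_logb_div_le_logb {ι : Type*} (s : Finset ι) {c C : ℝ} (hc : 1 < c) {a b : ι → ℝ}
    (ha : ∀ i ∈ s, 0 ≤ a i) (ha1 : ∑ i ∈ s, a i = 1) (hb : ∀ i ∈ s, 0 ≤ b i)
    (hab : ∀ i ∈ s, 0 < a i → 0 < b i) (hbC : ∑ i ∈ s, b i ≤ C) :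
    ∑ i ∈ s, a i * logb c (b i / a i) ≤ logb c C := by
  have hB := sum_pos_of_sum_pos_of_pos_imp s hb hab (ha1 ▸ one_pos)
  have := sum_mul_logb_sum_div_sum_le s hc ha hb hab
  rw [ha1, one_mul, one_div, logb_inv] at this
  have hflip : ∀ i, a i * logb c (b i / a i) = -(a i * logb c (a i / b i)) := fun i => by
    rw [← inv_div, logb_inv, mul_neg]
  simp only [hflip, sum_neg_distrib]
  linarith [logb_le_logb_of_le hc hB hbC]

end LogSum

section Law

variable {Ω α β : Type*} [Fintype Ω] [DecidableEq α] {P : Ω → ℝ}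

def lawPMF (P : Ω → ℝ) (V : Ω → α) (a : α) : ℝ :=
  ∑ ω, if V ω = a then P ω else 0

theorem lawPMF_nonneg (hP : ∀ ω, 0 ≤ P ω) (V : Ω → α) (a : α) : 0 ≤ lawPMF P V a :=
  sum_nonneg fun ω _ => ite_nonneg (hP ω) le_rfl

theorem le_lawPMF (hP : ∀ ω, 0 ≤ P ω) (V : Ω → α) (ω : Ω) : P ω ≤ lawPMF P V (V ω) := by
  simpa [lawPMF] using single_le_sum (f := fun ω' => if V ω' = V ω then P ω' else 0)
    (fun ω' _ => ite_nonneg (hP ω') le_rfl) (mem_univ ω)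

theorem sum_lawPMF_mul [Fintype α] (V : Ω → α) (h : α → ℝ) :
    ∑ a, lawPMF P V a * h a = ∑ ω, P ω * h (V ω) := by
  simp only [lawPMF, sum_mul, ite_mul, zero_mul]
  rw [sum_comm]
  simp

variable [DecidableEq β]

theorem sum_lawPMF_prodMk_right [Fintype β] (U : Ω → α) (V : Ω → β) (a : α) :
    ∑ b, lawPMF P (fun ω => (U ω, V ω)) (a, b) = lawPMF P U a := by
  simp only [lawPMF]
  rw [sum_comm]
  simp [ite_and]

theorem sum_lawPMF_prodMk_left [Fintype α] (U : Ω → α) (V : Ω → β) (b : β) :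
    ∑ a, lawPMF P (fun ω => (U ω, V ω)) (a, b) = lawPMF P V b := by
  simp only [lawPMF]
  rw [sum_comm]
  simp [ite_and]

end Law

section Product

variable {𝓧 : Type*} [Fintype 𝓧] {p : 𝓧 → ℝ} {n : ℕ}

theorem prodPMF_nonneg (hp : ∀ a, 0 ≤ p a) (x : Fin n → 𝓧) : 0 ≤ prodPMF p n x :=
  prod_nonneg fun i _ => hp (x i)

theorem sum_prodPMF (hp : ∑ a, p a = 1) : ∑ x, prodPMF p n x = 1 := by
  simp [prodPMF, ← Fintype.prod_sum, hp]

theorem lawPMF_prodPMF_eval [DecidableEq 𝓧] (hp : ∑ a, p a = 1) (i : Fin n) :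
    lawPMF (prodPMF p n) (fun x => x i) = p := by
  funext a
  have : ∀ x : Fin n → 𝓧, (if x i = a then prodPMF p n x else 0) =
      ∏ j, p (x j) * (if j = i then (if x j = a then 1 else 0) else 1) := fun x => by
    rw [prod_mul_distrib, Fintype.prod_ite_eq']
    simp [prodPMF]
  simp only [lawPMF, this]
  rw [← Fintype.prod_sum (fun j c => p c * if j = i then (if c = a then 1 else 0) else 1)]
  simp [hp]

end Product

theorem sum_prod_comp_le_card {ι 𝓧 𝓨 κ : Type*} [Fintype ι] [DecidableEq ι] [Fintype 𝓧]
    [Fintype κ] {r : ι → 𝓧 → 𝓨 → ℝ} (hr : ∀ i a b, 0 ≤ r i a b) (hr1 : ∀ i b, ∑ a, r i a b ≤ 1)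
    (f : (ι → 𝓧) → κ) (g : κ → ι → 𝓨) :
    ∑ x, ∏ i, r i (x i) (g (f x) i) ≤ Fintype.card κ := calc
  _ ≤ ∑ x : ι → 𝓧, ∑ m, ∏ i, r i (x i) (g m i) := sum_le_sum fun x _ =>
        single_le_sum (f := fun m => ∏ i, r i (x i) (g m i))
          (fun m _ => prod_nonneg fun i _ => hr _ _ _) (mem_univ (f x))
  _ = ∑ m, ∏ i, ∑ a, r i a (g m i) := by rw [sum_comm]; simp [Fintype.prod_sum]
  _ ≤ ∑ _m : κ, (1 : ℝ) := sum_le_sum fun m _ =>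
        prod_le_one (fun i _ => sum_nonneg fun a _ => hr _ _ _) fun i _ => hr1 _ _
  _ = Fintype.card κ := by simp

section Kernel

variable {𝓧 ι : Type*} [Fintype 𝓧] [Fintype ι] {p : 𝓧 → ℝ}

theorem le_outDist (hp : ∀ a, 0 ≤ p a) {K : 𝓧 → 𝓧 → ℝ} (hK : ∀ a b, 0 ≤ K a b) (a b : 𝓧) :
    p a * K a b ≤ outDist p K b :=
  single_le_sum (f := fun a => p a * K a b) (fun a _ => mul_nonneg (hp a) (hK a b)) (mem_univ a)

theorem IsKernel.isPMF_outDist {K : 𝓧 → 𝓧 → ℝ} (hK : IsKernel K) (hp : IsPMF p) :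
    IsPMF (outDist p K) := by
  refine ⟨fun b => sum_nonneg fun a _ => mul_nonneg (hp.1 a) ((hK a).1 b), ?_⟩
  simp only [outDist]
  rw [sum_comm]
  simp [← mul_sum, (hK _).2, hp.2]

theorem isKernel_sum_smul {w : ι → ℝ} (hw : ∀ i, 0 ≤ w i) (hw1 : ∑ i, w i = 1)
    {K : ι → 𝓧 → 𝓧 → ℝ} (hK : ∀ i, IsKernel (K i)) : IsKernel (∑ i, w i • K i) := fun a => by
  refine ⟨fun b => ?_, ?_⟩
  · simpa using sum_nonneg fun i _ => mul_nonneg (hw i) ((hK i a).1 b)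
  · simp only [Finset.sum_apply, Pi.smul_apply, smul_eq_mul]
    rw [sum_comm]
    simp [← mul_sum, (hK _ a).2, hw1]

theorem outDist_sum_smul (p : 𝓧 → ℝ) (w : ι → ℝ) (K : ι → 𝓧 → 𝓧 → ℝ) :
    outDist p (∑ i, w i • K i) = ∑ i, w i • outDist p (K i) := by
  funext b
  simp only [outDist, Finset.sum_apply, Pi.smul_apply, smul_eq_mul, mul_sum]
  rw [sum_comm]
  exact sum_congr rfl fun i _ => sum_congr rfl fun a _ => by ring

theorem expDistortion_sum_smul (p : 𝓧 → ℝ) (Δ : 𝓧 → 𝓧 → ℝ) (w : ι → ℝ) (K : ι → 𝓧 → 𝓧 → ℝ) :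
    expDistortion p Δ (∑ i, w i • K i) = ∑ i, w i * expDistortion p Δ (K i) := by
  simp only [expDistortion, Finset.sum_apply, Pi.smul_apply, smul_eq_mul, mul_sum, sum_mul]
  conv_rhs => rw [sum_comm]; enter [2, a]; rw [sum_comm]
  exact sum_congr rfl fun a _ => sum_congr rfl fun b _ => sum_congr rfl fun i _ => by ring

theorem mutualInfo_sum_smul_le (hp : ∀ a, 0 ≤ p a) {w : ι → ℝ} (hw : ∀ i, 0 ≤ w i)
    {K : ι → 𝓧 → 𝓧 → ℝ} (hK : ∀ i a b, 0 ≤ K i a b) :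
    mutualInfo p (∑ i, w i • K i) ≤ ∑ i, w i * mutualInfo p (K i) := by
  simp only [mutualInfo, outDist_sum_smul, Finset.sum_apply, Pi.smul_apply, smul_eq_mul, mul_sum]
  conv_rhs => rw [sum_comm]; enter [2, a]; rw [sum_comm]
  refine sum_le_sum fun a _ => sum_le_sum fun b _ => ?_
  rcases (hp a).eq_or_lt with hpa | hpa
  · simp [← hpa]
  have key := sum_mul_logb_sum_div_sum_le univ one_lt_two
    (a := fun i => w i * K i a b) (b := fun i => w i * outDist p (K i) b)
    (fun i _ => mul_nonneg (hw i) (hK i a b))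
    (fun i _ => mul_nonneg (hw i) ((mul_nonneg (hp a) (hK i a b)).trans (le_outDist hp (hK i) a b)))
    fun i _ hA => mul_pos (pos_of_mul_pos_left hA (hK i a b))
      ((mul_pos hpa (pos_of_mul_pos_right hA (hw i))).trans_le (le_outDist hp (hK i) a b))
  have hterm : ∀ i, w i * (p a * K i a b * logb 2 (K i a b / outDist p (K i) b)) =
      p a * (w i * K i a b * logb 2 (w i * K i a b / (w i * outDist p (K i) b))) := fun i => by
    rcases (hw i).eq_or_lt with hwi | hwi
    · simp [← hwi]
    rw [mul_div_mul_left _ _ hwi.ne']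
    ring
  rw [sum_congr rfl fun i _ => hterm i, ← mul_sum, ← mul_sum, mul_assoc]
  exact mul_le_mul_of_nonneg_left key hpa.le

end Kernel

section CondKernel

variable {𝓧 : Type*} [Fintype 𝓧] {p : 𝓧 → ℝ} {J : 𝓧 → 𝓧 → ℝ}

-- Outside the support of `p` the rows are filled with `p`, only so that the result is a kernel.
noncomputable def condKernel (p : 𝓧 → ℝ) (J : 𝓧 → 𝓧 → ℝ) (a b : 𝓧) : ℝ :=
  if p a = 0 then p b else J a b / p a

theorem mul_condKernel (hJ : ∀ a b, 0 ≤ J a b) (hJp : ∀ a, ∑ b, J a b = p a) (a b : 𝓧) :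
    p a * condKernel p J a b = J a b := by
  unfold condKernel
  split_ifs with h
  · have : J a b ≤ p a := hJp a ▸ single_le_sum (fun b _ => hJ a b) (mem_univ b)
    rw [h, zero_mul]
    exact le_antisymm (hJ a b) (h ▸ this)
  · exact mul_div_cancel₀ _ h

theorem isKernel_condKernel (hp : IsPMF p) (hJ : ∀ a b, 0 ≤ J a b)
    (hJp : ∀ a, ∑ b, J a b = p a) : IsKernel (condKernel p J) := fun a => by
  unfold condKernel
  split_ifs with h
  · exact hp
  · exact ⟨fun b => div_nonneg (hJ a b) (hp.1 a), by rw [← sum_div, hJp, div_self h]⟩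

theorem outDist_condKernel (hJ : ∀ a b, 0 ≤ J a b) (hJp : ∀ a, ∑ b, J a b = p a) :
    outDist p (condKernel p J) = fun b => ∑ a, J a b := by
  funext b
  simp only [outDist, mul_condKernel hJ hJp]

theorem expDistortion_condKernel (hJ : ∀ a b, 0 ≤ J a b) (hJp : ∀ a, ∑ b, J a b = p a)
    (Δ : 𝓧 → 𝓧 → ℝ) : expDistortion p Δ (condKernel p J) = ∑ a, ∑ b, J a b * Δ a b := by
  simp only [expDistortion, mul_condKernel hJ hJp]

theorem mutualInfo_condKernel (hJ : ∀ a b, 0 ≤ J a b) (hJp : ∀ a, ∑ b, J a b = p a) :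
    mutualInfo p (condKernel p J) =
      ∑ a, ∑ b, J a b * logb 2 (J a b / (p a * ∑ a', J a' b)) := by
  simp only [mutualInfo, outDist_condKernel hJ hJp, mul_condKernel hJ hJp]
  refine sum_congr rfl fun a _ => sum_congr rfl fun b _ => ?_
  by_cases h : p a = 0
  · have := mul_condKernel hJ hJp a b
    rw [h, zero_mul] at this
    simp [← this]
  · rw [condKernel, if_neg h, div_div]

end CondKernel

section Coding

variable {𝓧 : Type*} [Fintype 𝓧] [DecidableEq 𝓧] {p : 𝓧 → ℝ} {n : ℕ}

def letterJoint (p : 𝓧 → ℝ) (xh : (Fin n → 𝓧) → Fin n → 𝓧) (i : Fin n) : 𝓧 × 𝓧 → ℝ :=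
  lawPMF (prodPMF p n) fun x => (x i, xh x i)

noncomputable def letterKernel (p : 𝓧 → ℝ) (xh : (Fin n → 𝓧) → Fin n → 𝓧) (i : Fin n) :
    𝓧 → 𝓧 → ℝ :=
  condKernel p fun a b => letterJoint p xh i (a, b)

variable (xh : (Fin n → 𝓧) → Fin n → 𝓧) (i : Fin n)

theorem letterJoint_nonneg (hp : IsPMF p) (a b : 𝓧) : 0 ≤ letterJoint p xh i (a, b) :=
  lawPMF_nonneg (prodPMF_nonneg hp.1) _ _

theorem sum_letterJoint_right (hp : IsPMF p) (a : 𝓧) : ∑ b, letterJoint p xh i (a, b) = p a := by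
  rw [letterJoint, sum_lawPMF_prodMk_right, lawPMF_prodPMF_eval hp.2]

theorem sum_letterJoint_left (b : 𝓧) :
    ∑ a, letterJoint p xh i (a, b) = lawPMF (prodPMF p n) (fun x => xh x i) b :=
  sum_lawPMF_prodMk_left _ _ b

theorem sum_letterJoint_mul (h : 𝓧 → 𝓧 → ℝ) :
    ∑ a, ∑ b, letterJoint p xh i (a, b) * h a b = ∑ x, prodPMF p n x * h (x i) (xh x i) := by
  rw [← Fintype.sum_prod_type']
  exact sum_lawPMF_mul _ fun ab : 𝓧 × 𝓧 => h ab.1 ab.2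

theorem isKernel_letterKernel (hp : IsPMF p) : IsKernel (letterKernel p xh i) :=
  isKernel_condKernel hp (letterJoint_nonneg xh i hp) (sum_letterJoint_right xh i hp)

theorem outDist_letterKernel (hp : IsPMF p) :
    outDist p (letterKernel p xh i) = lawPMF (prodPMF p n) fun x => xh x i := by
  rw [letterKernel, outDist_condKernel (letterJoint_nonneg xh i hp) (sum_letterJoint_right xh i hp)]
  exact funext (sum_letterJoint_left xh i)

theorem expDistortion_letterKernel (hp : IsPMF p) (Δ : 𝓧 → 𝓧 → ℝ) :
    expDistortion p Δ (letterKernel p xh i) = ∑ x, prodPMF p n x * Δ (x i) (xh x i) := by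
  rw [letterKernel, expDistortion_condKernel (letterJoint_nonneg xh i hp)
    (sum_letterJoint_right xh i hp), sum_letterJoint_mul]

theorem mutualInfo_letterKernel (hp : IsPMF p) :
    mutualInfo p (letterKernel p xh i) = ∑ x, prodPMF p n x *
      logb 2 (letterJoint p xh i (x i, xh x i) /
        (p (x i) * lawPMF (prodPMF p n) (fun x => xh x i) (xh x i))) := by
  rw [letterKernel, mutualInfo_condKernel (letterJoint_nonneg xh i hp)
    (sum_letterJoint_right xh i hp)]
  simp only [sum_letterJoint_left]
  exact sum_letterJoint_mul xh i fun a b => logb 2 (letterJoint p xh i (a, b) /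
    (p a * lawPMF (prodPMF p n) (fun x => xh x i) b))

end Coding

theorem sum_mutualInfo_letterKernel_le {𝓧 κ : Type*} [Fintype 𝓧] [DecidableEq 𝓧] [Fintype κ]
    {p : 𝓧 → ℝ} (hp : IsPMF p) {n : ℕ} (f : (Fin n → 𝓧) → κ) (g : κ → Fin n → 𝓧) :
    ∑ i, mutualInfo p (letterKernel p (fun x => g (f x)) i) ≤ logb 2 (Fintype.card κ) := by
  set xh := fun x => g (f x)
  set P := prodPMF p n
  set J := letterJoint p xh
  set q := fun i => lawPMF P fun x => xh x i
  have hP : ∀ x, 0 ≤ P x := prodPMF_nonneg hp.1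
  have hr : ∀ i a b, 0 ≤ J i (a, b) / q i b := fun i a b =>
    div_nonneg (letterJoint_nonneg xh i hp a b) (lawPMF_nonneg hP _ b)
  have hr1 : ∀ i b, ∑ a, J i (a, b) / q i b ≤ 1 := fun i b => by
    rw [← sum_div, sum_letterJoint_left]
    exact div_self_le_one _
  set s := fun x => ∏ i, J i (x i, xh x i) / q i (xh x i)
  have hpos : ∀ x, 0 < P x → ∀ i, 0 < J i (x i, xh x i) ∧ 0 < q i (xh x i) ∧ 0 < p (x i) :=
    fun x hx i => ⟨hx.trans_le (le_lawPMF hP _ x), hx.trans_le (le_lawPMF hP _ x),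
      (hp.1 _).lt_of_ne fun h => hx.ne' (prod_eq_zero (mem_univ i) h.symm)⟩
  have hdensity : ∀ x, P x * ∑ i, logb 2 (J i (x i, xh x i) / (p (x i) * q i (xh x i))) =
      P x * logb 2 (s x / P x) := fun x => by
    rcases (hP x).eq_or_lt with hx | hx
    · rw [← hx, zero_mul, zero_mul]
    rw [show P x = ∏ i, p (x i) from rfl, ← prod_div_distrib,
      logb_prod _ _ fun i _ => by obtain ⟨hJi, hqi, hpi⟩ := hpos x hx i; positivity]
    simp only [div_div, mul_comm]
  calc ∑ i, mutualInfo p (letterKernel p xh i)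
      = ∑ x, P x * ∑ i, logb 2 (J i (x i, xh x i) / (p (x i) * q i (xh x i))) := by
        simp only [mutualInfo_letterKernel xh _ hp, mul_sum]
        exact sum_comm
    _ = ∑ x, P x * logb 2 (s x / P x) := sum_congr rfl fun x _ => hdensity x
    _ ≤ logb 2 (Fintype.card κ) :=
        sum_mul_logb_div_le_logb univ one_lt_two (fun x _ => hP x) (sum_prodPMF hp.2)
          (fun x _ => prod_nonneg fun i _ => hr i _ _)
          (fun x _ hx => prod_pos fun i _ => div_pos (hpos x hx i).1 (hpos x hx i).2.1)
          (sum_prod_comp_le_card hr hr1 f g)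

theorem convexOn_setOf_isPMF {𝓧 : Type*} [Fintype 𝓧] {φ : (𝓧 → ℝ) → ℝ}
    (hφ : ∀ q₁ q₂ : 𝓧 → ℝ, IsPMF q₁ → IsPMF q₂ → ∀ l : ℝ, 0 ≤ l → l ≤ 1 →
      φ (fun z => l * q₁ z + (1 - l) * q₂ z) ≤ l * φ q₁ + (1 - l) * φ q₂) :
    ConvexOn ℝ {q | IsPMF q} φ := by
  refine ⟨fun q₁ h₁ q₂ h₂ a b ha hb hab => ⟨fun z => ?_, ?_⟩,
    fun q₁ h₁ q₂ h₂ a b ha hb hab => ?_⟩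
  · have := h₁.1 z; have := h₂.1 z
    simp only [Pi.add_apply, Pi.smul_apply, smul_eq_mul]
    positivity
  · simp only [Pi.add_apply, Pi.smul_apply, smul_eq_mul, sum_add_distrib, ← mul_sum, h₁.2, h₂.2,
      mul_one, hab]
  · obtain rfl : b = 1 - a := by linarith
    exact hφ q₁ q₂ h₁ h₂ a ha (by linarith)

theorem converse_memoryless_source_general {𝓧 : Type*} [Fintype 𝓧] [DecidableEq 𝓧]
    (pX : 𝓧 → ℝ) (hp : IsPMF pX) (Δ : 𝓧 → 𝓧 → ℝ)
    (d : (𝓧 → ℝ) → (𝓧 → ℝ) → ℝ)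
    (hconv : ∀ (p₀ q₁ q₂ : 𝓧 → ℝ), IsPMF p₀ → IsPMF q₁ → IsPMF q₂ →
      ∀ l : ℝ, 0 ≤ l → l ≤ 1 →
        d p₀ (fun z => l * q₁ z + (1 - l) * q₂ z) ≤ l * d p₀ q₁ + (1 - l) * d p₀ q₂)
    (n M : ℕ) (hn : 0 < n) (hM : 0 < M) (R D P : ℝ)
    (hrate : (M : ℝ) ≤ (2 : ℝ) ^ ((n : ℝ) * R))
    (f : (Fin n → 𝓧) → Fin M) (g : Fin M → Fin n → 𝓧)
    (hD : (1 / (n : ℝ)) * ∑ i : Fin n,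
      (∑ x : Fin n → 𝓧, prodPMF pX n x * Δ (x i) (g (f x) i)) ≤ D)
    (hP : (1 / (n : ℝ)) * ∑ i : Fin n,
      d pX (fun y => ∑ x : Fin n → 𝓧, if g (f x) i = y then prodPMF pX n x else 0) ≤ P) :
    RDP pX Δ d D P ≤ ENNReal.ofReal R := by
  set K := letterKernel pX fun x => g (f x)
  have hK : ∀ i, IsKernel (K i) := fun i => isKernel_letterKernel _ i hp
  have hw : ∀ i : Fin n, 0 ≤ 1 / (n : ℝ) := fun _ => by positivity
  have hw1 : ∑ _i : Fin n, 1 / (n : ℝ) = 1 := by simp [(Nat.cast_pos.2 hn).ne']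
  have hrateM : logb 2 M ≤ n * R := by
    simpa [logb_rpow] using logb_le_logb_of_le one_lt_two (Nat.cast_pos.2 hM) hrate
  unfold RDP
  refine le_trans (sInf_le ⟨∑ i, (1 / (n : ℝ)) • K i, isKernel_sum_smul hw hw1 hK, ?_, ?_, rfl⟩)
    (ENNReal.ofReal_le_ofReal ?_)
  · simpa [K, expDistortion_sum_smul, expDistortion_letterKernel _ _ hp, ← mul_sum] using hD
  · rw [outDist_sum_smul]
    refine ((convexOn_setOf_isPMF (hconv pX · · hp)).map_sum_le (fun i _ => hw i) hw1
      fun i _ => (hK i).isPMF_outDist hp).trans ?_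
    simp only [K, outDist_letterKernel _ _ hp, smul_eq_mul, ← mul_sum]
    exact hP
  · calc mutualInfo pX (∑ i, (1 / (n : ℝ)) • K i)
        ≤ 1 / n * ∑ i, mutualInfo pX (K i) := by
          rw [mul_sum]
          exact mutualInfo_sum_smul_le hp.1 hw fun i a b => ((hK i a).1 b)
      _ ≤ 1 / n * logb 2 M := by
          gcongr
          simpa using sum_mutualInfo_letterKernel_le hp f g
      _ ≤ R := by
          rw [div_mul_eq_mul_div, one_mul, div_le_iff₀ (Nat.cast_pos.2 hn)]
          linarith

/-- STATEMENT 16: converse for a memoryless stationary source. Any encoder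
`f : 𝓧ⁿ → {1,…,M}` with `M ≤ 2^{nR}` and decoder `g` whose reconstructions satisfy
`(1/n) Σᵢ E[Δ(Xᵢ, X̂ᵢ)] ≤ D` and `(1/n) Σᵢ d(p_X, p_X̂ᵢ) ≤ P` must have rate
`R ≥ R(D,P)`, provided the divergence `d` is convex in its second argument. -/
theorem converse_memoryless_source {𝓧 : Type*} [Fintype 𝓧] [DecidableEq 𝓧] [Nonempty 𝓧]
    (pX : 𝓧 → ℝ) (hp : IsPMF pX) (Δ : 𝓧 → 𝓧 → ℝ)
    (d : (𝓧 → ℝ) → (𝓧 → ℝ) → ℝ)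
    (hconv : ∀ (p₀ q₁ q₂ : 𝓧 → ℝ), IsPMF p₀ → IsPMF q₁ → IsPMF q₂ →
      ∀ l : ℝ, 0 ≤ l → l ≤ 1 →
        d p₀ (fun z => l * q₁ z + (1 - l) * q₂ z) ≤ l * d p₀ q₁ + (1 - l) * d p₀ q₂)
    (n M : ℕ) (hn : 0 < n) (hM : 0 < M) (R D P : ℝ)
    (hrate : (M : ℝ) ≤ (2 : ℝ) ^ ((n : ℝ) * R))
    (f : (Fin n → 𝓧) → Fin M) (g : Fin M → Fin n → 𝓧)
    (hD : (1 / (n : ℝ)) * ∑ i : Fin n,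
      (∑ x : Fin n → 𝓧, prodPMF pX n x * Δ (x i) (g (f x) i)) ≤ D)
    (hP : (1 / (n : ℝ)) * ∑ i : Fin n,
      d pX (fun y => ∑ x : Fin n → 𝓧, if g (f x) i = y then prodPMF pX n x else 0) ≤ P) :
    RDP pX Δ d D P ≤ ENNReal.ofReal R :=
  converse_memoryless_source_general pX hp Δ d hconv n M hn hM R D P hrate f g hD hP
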